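/- arXiv:1205.3340 — 6 statements merged into one kernel-verified Lean document; each statement's English description precedes it below -/
import Mathlib

section
/- Let ρ = β·π + (1−β)·σ on C^d ⊗ C^d, where π is the projector onto a maximally entangled pure state, σ is a density matrix with Tr(π σ) = 0, and 0 ≤ β ≤ 1. If β > 1/d, then ρ is entangled (not separable). -/
open Matrix
open scoped Kronecker ComplexOrder

noncomputable section

/-- A density matrix: positive semi-definite (hence Hermitian) with trace 1. -/
def IsDensity {n : Type*} [Fintype n] [DecidableEq n] (ρ : Matrix n n ℂ) : Prop :=
  ρ.PosSemidef ∧ ρ.trace = 1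

/-- Separability: a convex combination of tensor products of density matrices. -/
def SepState {d₁ d₂ : ℕ} (ρ : Matrix (Fin d₁ × Fin d₂) (Fin d₁ × Fin d₂) ℂ) : Prop :=
  ∃ (n : ℕ) (w : Fin n → ℝ) (σ₁ : Fin n → Matrix (Fin d₁) (Fin d₁) ℂ)
    (σ₂ : Fin n → Matrix (Fin d₂) (Fin d₂) ℂ),
    (∀ i, 0 ≤ w i) ∧ (∑ i, w i = 1) ∧ (∀ i, IsDensity (σ₁ i)) ∧ (∀ i, IsDensity (σ₂ i)) ∧
    ρ = ∑ i, (w i : ℂ) • (σ₁ i ⊗ₖ σ₂ i)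

/-- Partial trace over the second factor. -/
def ptraceB {dA dB : ℕ} (ρ : Matrix (Fin dA × Fin dB) (Fin dA × Fin dB) ℂ) :
    Matrix (Fin dA) (Fin dA) ℂ :=
  Matrix.of fun a a' => ∑ b : Fin dB, ρ (a, b) (a', b)

/-!
`W ↦ Tr(π W)` is an entanglement witness. On `ρ` it takes the value `β`, since `Tr(π π) = 1` and
`Tr(π σ) = 0`. On a product state it is at most `1/d`: reshaping `χ` into a `d × d` matrix `M`
(so that `χ = vec Mᵀ` and `M Mᴴ = ptraceB π = 1/d`), one gets
`Tr(π (A ⊗ B)) = Tr(Mᴴ A M Bᵀ) ≤ Tr(Mᴴ A M) Tr(B) = Tr(A M Mᴴ) = 1/d`,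
using `Tr(C D) ≤ Tr(C) Tr(D)` for positive semidefinite `C`, `D`. By linearity the same bound
holds on every separable state, so `β > 1/d` rules out separability.
-/

namespace Matrix

section CommSemiring

variable {R m n : Type*} [CommSemiring R] [Fintype m] [Fintype n]

theorem trace_vecMulVec_mul (x y : n → R) (K : Matrix n n R) :
    (vecMulVec x y * K).trace = y ⬝ᵥ (K *ᵥ x) := by
  rw [vecMulVec_mul, trace_vecMulVec, dotProduct_comm, dotProduct_mulVec]

theorem trace_vecMulVec_mul_self (x y : n → R) :
    (vecMulVec x y * vecMulVec x y).trace = (x ⬝ᵥ y) ^ 2 := by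
  rw [vecMulVec_mul_vecMulVec, trace_vecMulVec, dotProduct_smul, smul_eq_mul, dotProduct_comm y,
    sq]

theorem trace_vecMulVec_vec_mul_kronecker [StarRing R] (M : Matrix m n R) (A : Matrix m m R)
    (B : Matrix n n R) :
    (vecMulVec (vec Mᵀ) (star (vec Mᵀ)) * (A ⊗ₖ B)).trace = (Mᴴ * A * M * Bᵀ).trace := by
  rw [trace_vecMulVec_mul, kronecker_mulVec_vec, star_vec_dotProduct_vec, ← trace_transpose]
  simp only [transpose_mul, transpose_transpose, show Mᵀᴴᵀ = Mᴴ from rfl]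
  rw [trace_mul_comm]
  simp only [Matrix.mul_assoc]

end CommSemiring

section RCLike

variable {𝕜 m n : Type*} [RCLike 𝕜] [Fintype m] [Fintype n] [DecidableEq n]

theorem PosSemidef.trace_mul_le_trace_mul_trace {C D : Matrix n n 𝕜} (hC : C.PosSemidef)
    (hD : D.PosSemidef) : (C * D).trace ≤ C.trace * D.trace := by
  set U : Matrix n n 𝕜 := (hC.1.eigenvectorUnitary : Matrix n n 𝕜)
  set E := star U * D * U
  have hE : E.PosSemidef := by
    simpa [E, star_eq_conjTranspose] using hD.conjTranspose_mul_mul_same U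
  have hUU : U * star U = 1 := Unitary.coe_mul_star_self _
  have hΛ : star U * C * U = diagonal (RCLike.ofReal ∘ hC.1.eigenvalues) := by
    simpa using hC.1.conjStarAlgAut_star_eigenvectorUnitary
  have hDE : D.trace = E.trace := by rw [trace_mul_cycle, hUU, one_mul]
  calc (C * D).trace = (star U * (C * D) * U).trace := by rw [trace_mul_cycle, hUU, one_mul]
    _ = (star U * C * U * E).trace := by
      simp only [E, mul_assoc]
      rw [← mul_assoc U, hUU, one_mul]
    _ = ∑ i, (hC.1.eigenvalues i : 𝕜) * E i i := by simp [hΛ, trace, diagonal_mul]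
    _ ≤ ∑ i, (hC.1.eigenvalues i : 𝕜) * E.trace := by
      gcongr with i
      · exact_mod_cast hC.eigenvalues_nonneg i
      · exact Finset.single_le_sum (f := fun j => E j j) (fun j _ => hE.diag_nonneg)
          (Finset.mem_univ i)
    _ = C.trace * D.trace := by rw [← Finset.sum_mul, hC.1.trace_eq_sum_eigenvalues, hDE]

theorem trace_vecMulVec_vec_mul_kronecker_le (M : Matrix m n 𝕜) {A : Matrix m m 𝕜}
    {B : Matrix n n 𝕜} (hA : A.PosSemidef) (hB : B.PosSemidef) :
    (vecMulVec (vec Mᵀ) (star (vec Mᵀ)) * (A ⊗ₖ B)).trace ≤ (A * (M * Mᴴ)).trace * B.trace := by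
  rw [trace_vecMulVec_vec_mul_kronecker]
  calc (Mᴴ * A * M * Bᵀ).trace ≤ (Mᴴ * A * M).trace * Bᵀ.trace :=
        (hA.conjTranspose_mul_mul_same M).trace_mul_le_trace_mul_trace hB.transpose
    _ = (A * (M * Mᴴ)).trace * B.trace := by
      rw [trace_mul_cycle, trace_mul_comm, trace_transpose]

end RCLike

end Matrix

open Matrix

theorem ptraceB_vecMulVec_vec_transpose {dA dB : ℕ} (M : Matrix (Fin dA) (Fin dB) ℂ) :
    ptraceB (vecMulVec (vec Mᵀ) (star (vec Mᵀ))) = M * Mᴴ := by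
  ext a a'
  simp [ptraceB, mul_apply, vecMulVec_apply]

theorem SepState.trace_mul_le {d₁ d₂ : ℕ} {ρ : Matrix (Fin d₁ × Fin d₂) (Fin d₁ × Fin d₂) ℂ}
    (hρ : SepState ρ) (W : Matrix (Fin d₁ × Fin d₂) (Fin d₁ × Fin d₂) ℂ) {c : ℝ}
    (hW : ∀ A B, IsDensity A → IsDensity B → (W * (A ⊗ₖ B)).trace ≤ (c : ℂ)) :
    (W * ρ).trace ≤ (c : ℂ) := by
  obtain ⟨n, w, σ₁, σ₂, hw0, hw1, hσ₁, hσ₂, rfl⟩ := hρ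
  calc (W * ∑ i, (w i : ℂ) • (σ₁ i ⊗ₖ σ₂ i)).trace
      = ∑ i, (w i : ℂ) * (W * (σ₁ i ⊗ₖ σ₂ i)).trace := by
        simp [Finset.mul_sum, trace_sum, trace_smul]
    _ ≤ ∑ i, (w i : ℂ) * c := by
      gcongr with i
      · exact_mod_cast hw0 i
      · exact hW _ _ (hσ₁ i) (hσ₂ i)
    _ = c := by rw [← Finset.sum_mul, ← Complex.ofReal_sum, hw1, Complex.ofReal_one, one_mul]

theorem splitted_state_entangled_general {d : ℕ}
    (χ : Fin d × Fin d → ℂ)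
    (π : Matrix (Fin d × Fin d) (Fin d × Fin d) ℂ)
    (hπ : π = Matrix.vecMulVec χ (star χ))
    (hπdens : IsDensity π)
    (hmax : ptraceB π = ((d : ℂ))⁻¹ • 1)
    (σ : Matrix (Fin d × Fin d) (Fin d × Fin d) ℂ)
    (horth : (π * σ).trace = 0)
    (β : ℝ) (hβ : 1 / d < β)
    (ρ : Matrix (Fin d × Fin d) (Fin d × Fin d) ℂ)
    (hρ : ρ = (β : ℂ) • π + ((1 - β : ℝ) : ℂ) • σ) :
    ¬ SepState ρ := by
  intro hsep
  set M : Matrix (Fin d) (Fin d) ℂ := of fun a b => χ (a, b)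
  have hπM : π = vecMulVec (vec Mᵀ) (star (vec Mᵀ)) := hπ
  have hMM : M * Mᴴ = (d : ℂ)⁻¹ • 1 := by rw [← ptraceB_vecMulVec_vec_transpose, ← hπM, hmax]
  have hππ : (π * π).trace = 1 := by
    rw [hπ, trace_vecMulVec_mul_self, ← trace_vecMulVec, ← hπ, hπdens.2, one_pow]
  have hπρ : (π * ρ).trace = β := by
    simp [hρ, mul_add, trace_add, trace_smul, hππ, horth]
  have hproduct : ∀ A B, IsDensity A → IsDensity B → (π * (A ⊗ₖ B)).trace ≤ ((d⁻¹ : ℝ) : ℂ) := by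
    intro A B hA hB
    calc (π * (A ⊗ₖ B)).trace ≤ (A * (M * Mᴴ)).trace * B.trace :=
          hπM ▸ trace_vecMulVec_vec_mul_kronecker_le M hA.1 hB.1
      _ = ((d⁻¹ : ℝ) : ℂ) := by simp [hMM, trace_smul, hA.2, hB.2]
  have hβle : β ≤ (d : ℝ)⁻¹ := Complex.real_le_real.mp (hπρ ▸ hsep.trace_mul_le π hproduct)
  exact (one_div (d : ℝ) ▸ hβ).not_ge hβle

/-- Splitted states: if `ρ = β π + (1−β) σ` with `π` the projector onto a
maximally entangled pure state, `σ` a density matrix orthogonal to `π`, and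
`β > 1/d`, then `ρ` is entangled. -/
theorem splitted_state_entangled {d : ℕ} (hd : 0 < d)
    (χ : Fin d × Fin d → ℂ)
    (π : Matrix (Fin d × Fin d) (Fin d × Fin d) ℂ)
    (hπ : π = Matrix.vecMulVec χ (star χ))
    (hπdens : IsDensity π)
    (hmax : ptraceB π = ((d : ℂ))⁻¹ • 1)
    (σ : Matrix (Fin d × Fin d) (Fin d × Fin d) ℂ)
    (hσ : IsDensity σ) (horth : (π * σ).trace = 0)
    (β : ℝ) (hβ0 : 0 ≤ β) (hβ1 : β ≤ 1) (hβ : 1 / d < β)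
    (ρ : Matrix (Fin d × Fin d) (Fin d × Fin d) ℂ)
    (hρ : ρ = (β : ℂ) • π + ((1 - β : ℝ) : ℂ) • σ) :
    ¬ SepState ρ :=
  splitted_state_entangled_general χ π hπ hπdens hmax σ horth β hβ ρ hρ
end
end

section
/- If a density matrix ρ on C^{d₁} ⊗ C^{d₂} is separable, then its partial transpose ρ^{T_A} (transpose on the first factor) is positive semi-definite. -/
open Matrix
open scoped Kronecker ComplexOrder

noncomputable section

/-- Partial transpose on the first tensor factor. -/
def ptransposeA {d₁ d₂ : ℕ} (ρ : Matrix (Fin d₁ × Fin d₂) (Fin d₁ × Fin d₂) ℂ) :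
    Matrix (Fin d₁ × Fin d₂) (Fin d₁ × Fin d₂) ℂ :=
  Matrix.of fun p q => ρ (q.1, p.2) (p.1, q.2)

/-!
The partial transpose is linear and sends `σ₁ ⊗ₖ σ₂` to `σ₁ᵀ ⊗ₖ σ₂`. Transposition preserves
positive semidefiniteness, so the partial transpose of a separable state is again a nonnegative
combination of Kronecker products of positive semidefinite matrices, hence positive semidefinite.
-/

section PartialTranspose

variable {d₁ d₂ : ℕ}

theorem ptransposeA_sum {ι : Type*} (s : Finset ι)
    (ρ : ι → Matrix (Fin d₁ × Fin d₂) (Fin d₁ × Fin d₂) ℂ) :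
    ptransposeA (∑ i ∈ s, ρ i) = ∑ i ∈ s, ptransposeA (ρ i) := by
  ext p q
  simp only [ptransposeA, of_apply, Matrix.sum_apply]

theorem ptransposeA_smul (c : ℂ) (ρ : Matrix (Fin d₁ × Fin d₂) (Fin d₁ × Fin d₂) ℂ) :
    ptransposeA (c • ρ) = c • ptransposeA ρ := by
  ext p q
  simp only [ptransposeA, of_apply, Matrix.smul_apply]

theorem ptransposeA_kronecker (A : Matrix (Fin d₁) (Fin d₁) ℂ) (B : Matrix (Fin d₂) (Fin d₂) ℂ) :
    ptransposeA (A ⊗ₖ B) = Aᵀ ⊗ₖ B := by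
  ext p q
  simp only [ptransposeA, of_apply, kroneckerMap_apply, transpose_apply]

end PartialTranspose

theorem separable_implies_ppt_general {d₁ d₂ : ℕ}
    (ρ : Matrix (Fin d₁ × Fin d₂) (Fin d₁ × Fin d₂) ℂ)
    (hsep : SepState ρ) :
    (ptransposeA ρ).PosSemidef := by
  obtain ⟨n, w, σ₁, σ₂, hw, -, hσ₁, hσ₂, rfl⟩ := hsep
  rw [ptransposeA_sum]
  refine posSemidef_sum _ fun i _ => ?_
  rw [ptransposeA_smul, ptransposeA_kronecker]
  exact ((hσ₁ i).1.transpose.kronecker (hσ₂ i).1).smul (Complex.zero_le_real.mpr (hw i))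

/-- Peres–Horodecki criterion (necessary direction): a separable density matrix
has positive semi-definite partial transpose. -/
theorem separable_implies_ppt {d₁ d₂ : ℕ}
    (ρ : Matrix (Fin d₁ × Fin d₂) (Fin d₁ × Fin d₂) ℂ)
    (hρ : IsDensity ρ) (hsep : SepState ρ) :
    (ptransposeA ρ).PosSemidef :=
  separable_implies_ppt_general ρ hsep
end
end

section
/- Let ρ be the 4×4 density matrix which, in the basis ordering {|1⟩, |d²−2⟩, |d²⟩, |d²−1⟩}, is diag(ρ₁, ρ_{d²−2}, ρ_{d²}, ρ_{d²−1}), and let K be the unitary mapping |1⟩ ↦ (|↑↑⟩+|↓↓⟩)/√2, |d²−2⟩ ↦ |↑↓⟩, |d²⟩ ↦ |↓↑⟩, |d²−1⟩ ↦ (|↑↑⟩−|↓↓⟩)/√2. Then the partial transpose of KρK† (on the second qubit) has eigenvalues (ρ₁+ρ_{d²−1})/2 (twice) and (ρ_{d²−2}+ρ_{d²})/2 ± √[((ρ_{d²−2}+ρ_{d²})/2)² − ρ_{d²−2}ρ_{d²} + ((ρ₁−ρ_{d²−1})/2)²]. -/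
open Matrix Polynomial

noncomputable section

/-- Partial transpose on the second tensor factor. -/
def ptransposeB {d₁ d₂ : ℕ} (ρ : Matrix (Fin d₁ × Fin d₂) (Fin d₁ × Fin d₂) ℂ) :
    Matrix (Fin d₁ × Fin d₂) (Fin d₁ × Fin d₂) ℂ :=
  Matrix.of fun p q => ρ (p.1, q.2) (q.1, p.2)

/-- The unitary `K` mapping the four basis vectors `|1⟩, |d²−2⟩, |d²⟩, |d²−1⟩`
respectively to `(|↑↑⟩+|↓↓⟩)/√2, |↑↓⟩, |↓↑⟩, (|↑↑⟩−|↓↓⟩)/√2`. -/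
def Kiso : Matrix (Fin 2 × Fin 2) (Fin 4) ℂ :=
  Matrix.of fun p j =>
    if j = 0 then (if p.1 = p.2 then ((Real.sqrt 2 : ℂ))⁻¹ else 0)
    else if j = 1 then (if p = (0, 1) then 1 else 0)
    else if j = 2 then (if p = (1, 0) then 1 else 0)
    else if p = (0, 0) then ((Real.sqrt 2 : ℂ))⁻¹
    else if p = (1, 1) then -((Real.sqrt 2 : ℂ))⁻¹
    else 0

/-- `ρ = diag(ρ₁, ρ_{d²−2}, ρ_{d²}, ρ_{d²−1})` in the ordered basis
`{|1⟩, |d²−2⟩, |d²⟩, |d²−1⟩}`; here `r1 = ρ₁`, `r2 = ρ_{d²−2}`,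
`r3 = ρ_{d²−1}`, `r4 = ρ_{d²}`. -/
def diagState (r1 r2 r3 r4 : ℝ) : Matrix (Fin 4) (Fin 4) ℂ :=
  Matrix.diagonal ![(r1 : ℂ), (r2 : ℂ), (r4 : ℂ), (r3 : ℂ)]

/-! Conjugation by `K` turns the diagonal `ρ` into a matrix whose only off-diagonal entries are the
coherence `(ρ₁ − ρ_{d²−1})/2` between `|↑↑⟩` and `|↓↓⟩`. The partial transpose moves that coherence
to the `|↑↓⟩, |↓↑⟩` entries, so in the basis ordered `↑↑, ↓↓, ↑↓, ↓↑` the result is block diagonal: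
the scalar `(ρ₁ + ρ_{d²−1})/2` on the first block and a real symmetric `2 × 2` matrix on the second,
whose eigenvalues come from the quadratic formula. -/

namespace Matrix

theorem charpoly_fin_two_eq_mul {R : Type*} [CommRing R] [Nontrivial R]
    (A : Matrix (Fin 2) (Fin 2) R) {m s : R} (hm : 2 * m = A.trace) (hs : s ^ 2 = m ^ 2 - A.det) :
    A.charpoly = (X - C (m + s)) * (X - C (m - s)) := by
  rw [charpoly_fin_two, ← hm, show A.det = m ^ 2 - s ^ 2 by rw [hs]; ring]
  simp only [C_mul, C_sub, C_add, C_pow, C_ofNat]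
  ring

theorem charpoly_ofReal_symm_fin_two (a b c : ℝ) :
    (!![(a : ℂ), b; b, c]).charpoly =
      (X - C (((a + c) / 2 + √(((a + c) / 2) ^ 2 - a * c + b ^ 2) : ℝ) : ℂ)) *
        (X - C (((a + c) / 2 - √(((a + c) / 2) ^ 2 - a * c + b ^ 2) : ℝ) : ℂ)) := by
  have hdisc : 0 ≤ ((a + c) / 2) ^ 2 - a * c + b ^ 2 := by
    nlinarith [sq_nonneg ((a - c) / 2), sq_nonneg b]
  rw [Complex.ofReal_add, Complex.ofReal_sub]
  refine charpoly_fin_two_eq_mul _ ?_ ?_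
  · simp [trace_fin_two]
    ring
  · rw [← Complex.ofReal_pow, Real.sq_sqrt hdisc, det_fin_two_of]
    push_cast
    ring

end Matrix

def diagAntidiagEquiv : Fin 2 ⊕ Fin 2 ≃ Fin 2 × Fin 2 where
  toFun := Sum.elim (fun i => (i, i)) (fun i => (i, i.rev))
  invFun p := if p.1 = p.2 then .inl p.1 else .inr p.1
  left_inv := by decide
  right_inv := by decide

theorem reindex_ptransposeB_Kiso_conj (r1 r2 r3 r4 : ℝ) :
    reindex diagAntidiagEquiv.symm diagAntidiagEquiv.symm
        (ptransposeB (Kiso * diagState r1 r2 r3 r4 * Kisoᴴ)) =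
      fromBlocks (diagonal fun _ => (((r1 + r3) / 2 : ℝ) : ℂ)) 0 0
        !![(r2 : ℂ), (((r1 - r3) / 2 : ℝ) : ℂ); (((r1 - r3) / 2 : ℝ) : ℂ), r4] := by
  have half (z : ℂ) : ((√2 : ℝ) : ℂ)⁻¹ * z * ((√2 : ℝ) : ℂ)⁻¹ = z / 2 := by
    rw [mul_right_comm, ← mul_inv, ← Complex.ofReal_mul, Real.mul_self_sqrt zero_le_two]
    push_cast
    ring
  ext (i | i) (j | j) <;> fin_cases i <;> fin_cases j <;>
    simp [diagAntidiagEquiv, ptransposeB, Kiso, diagState, mul_apply, Fin.sum_univ_four, half] <;>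
    ring

theorem ptranspose_eigenvalues_general (r1 r2 r3 r4 : ℝ) :
    (ptransposeB (Kiso * diagState r1 r2 r3 r4 * Kisoᴴ)).charpoly =
      (X - C (((r1 + r3) / 2 : ℝ) : ℂ)) ^ 2 *
        (X - C ((((r2 + r4) / 2 +
          Real.sqrt (((r2 + r4) / 2) ^ 2 - r2 * r4 + ((r1 - r3) / 2) ^ 2)) : ℝ) : ℂ)) *
        (X - C ((((r2 + r4) / 2 -
          Real.sqrt (((r2 + r4) / 2) ^ 2 - r2 * r4 + ((r1 - r3) / 2) ^ 2)) : ℝ) : ℂ)) := by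
  rw [← charpoly_reindex diagAntidiagEquiv.symm, reindex_ptransposeB_Kiso_conj,
    charpoly_fromBlocks_zero₁₂, charpoly_diagonal, charpoly_ofReal_symm_fin_two,
    Finset.prod_const, Finset.card_univ, Fintype.card_fin, mul_assoc]

/-- The partial transpose of `KρK†` has eigenvalues `(ρ₁+ρ_{d²−1})/2` (twice) and
`(ρ_{d²−2}+ρ_{d²})/2 ± √(((ρ_{d²−2}+ρ_{d²})/2)² − ρ_{d²−2}ρ_{d²} + ((ρ₁−ρ_{d²−1})/2)²)`. -/
theorem ptranspose_eigenvalues (r1 r2 r3 r4 : ℝ)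
    (h1 : 0 ≤ r1) (h2 : 0 ≤ r2) (h3 : 0 ≤ r3) (h4 : 0 ≤ r4) :
    (ptransposeB (Kiso * diagState r1 r2 r3 r4 * Kisoᴴ)).charpoly =
      (X - C (((r1 + r3) / 2 : ℝ) : ℂ)) ^ 2 *
        (X - C ((((r2 + r4) / 2 +
          Real.sqrt (((r2 + r4) / 2) ^ 2 - r2 * r4 + ((r1 - r3) / 2) ^ 2)) : ℝ) : ℂ)) *
        (X - C ((((r2 + r4) / 2 -
          Real.sqrt (((r2 + r4) / 2) ^ 2 - r2 * r4 + ((r1 - r3) / 2) ^ 2)) : ℝ) : ℂ)) :=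
  ptranspose_eigenvalues_general r1 r2 r3 r4
end
end

section
/- With the setup of the previous statement, if (ρ₁ − ρ_{d²−1})/2 > √(ρ_{d²−2}·ρ_{d²}), then the partial transpose of KρK† has a negative eigenvalue, and hence KρK† is entangled. -/
open Matrix
open scoped Kronecker ComplexOrder

noncomputable section

/-!
Conjugation by `K` turns the weights `ρ₁`, `ρ_{d²−1}` of the two Bell states into a coherence
`b = (ρ₁ − ρ_{d²−1})/2` between `|↑↑⟩` and `|↓↓⟩`. Partial transposition moves this coherence
into the span of `|↑↓⟩, |↓↑⟩`, on which the partial transpose acts as `!![ρ_{d²−2}, b; b, ρ_{d²}]`.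
The hypothesis says that this block has negative determinant, hence a negative eigenvalue,
whereas the partial transpose of a separable state is positive semidefinite.
-/

section PartialTranspose

variable {d₁ d₂ : ℕ}

lemma ptransposeB_kronecker (A : Matrix (Fin d₁) (Fin d₁) ℂ) (B : Matrix (Fin d₂) (Fin d₂) ℂ) :
    ptransposeB (A ⊗ₖ B) = A ⊗ₖ Bᵀ := by
  ext p q
  simp [ptransposeB, kroneckerMap_apply]

lemma ptransposeB_sum {ι : Type*} (s : Finset ι)
    (f : ι → Matrix (Fin d₁ × Fin d₂) (Fin d₁ × Fin d₂) ℂ) :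
    ptransposeB (∑ i ∈ s, f i) = ∑ i ∈ s, ptransposeB (f i) := by
  ext p q
  simp [ptransposeB, Matrix.sum_apply]

lemma ptransposeB_smul (c : ℂ) (A : Matrix (Fin d₁ × Fin d₂) (Fin d₁ × Fin d₂) ℂ) :
    ptransposeB (c • A) = c • ptransposeB A := by
  ext p q
  simp [ptransposeB]

theorem SepState.posSemidef_ptransposeB {ρ : Matrix (Fin d₁ × Fin d₂) (Fin d₁ × Fin d₂) ℂ}
    (h : SepState ρ) : (ptransposeB ρ).PosSemidef := by
  obtain ⟨n, w, σ₁, σ₂, hw, -, hσ₁, hσ₂, rfl⟩ := h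
  rw [ptransposeB_sum]
  refine posSemidef_sum _ fun i _ => ?_
  rw [ptransposeB_smul, ptransposeB_kronecker]
  exact ((hσ₁ i).1.kronecker (hσ₂ i).1.transpose).smul (Complex.zero_le_real.mpr (hw i))

end PartialTranspose

lemma Matrix.PosSemidef.nonneg_of_mulVec_eq_smul {n : Type*} [Fintype n] {A : Matrix n n ℂ}
    (hA : A.PosSemidef) {v : n → ℂ} (hv : v ≠ 0) {μ : ℝ} (h : A *ᵥ v = (μ : ℂ) • v) :
    0 ≤ μ := by
  have hquad := hA.dotProduct_mulVec_nonneg v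
  rw [h, dotProduct_smul, smul_eq_mul] at hquad
  by_contra! hμ
  exact (mul_neg_of_neg_of_pos (by exact_mod_cast hμ)
    (dotProduct_star_self_pos_iff.mpr hv)).not_ge hquad

lemma exists_neg_root_of_mul_lt_sq {p q b : ℝ} (h : p * q < b ^ 2) :
    ∃ μ < 0, μ ^ 2 - (p + q) * μ + p * q - b ^ 2 = 0 := by
  set s := √(((p - q) / 2) ^ 2 + b ^ 2)
  have hs : s ^ 2 = ((p - q) / 2) ^ 2 + b ^ 2 := Real.sq_sqrt (by positivity)
  refine ⟨(p + q) / 2 - s, ?_, by linear_combination hs⟩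
  have : |(p + q) / 2| < s := Real.lt_sqrt_of_sq_lt (by rw [sq_abs]; linarith)
  linarith [le_abs_self ((p + q) / 2)]

lemma ptransposeB_Kiso_diagState_mulVec (r1 r2 r3 r4 : ℝ) (x y : ℂ) :
    ptransposeB (Kiso * diagState r1 r2 r3 r4 * Kisoᴴ) *ᵥ
        (Pi.single (0, 1) x + Pi.single (1, 0) y) =
      Pi.single (0, 1) (r2 * x + ((r1 - r3) / 2 : ℝ) * y) +
        Pi.single (1, 0) (((r1 - r3) / 2 : ℝ) * x + r4 * y) := by
  have hsqrt2 : ((√2 : ℝ) : ℂ)⁻¹ * ((√2 : ℝ) : ℂ)⁻¹ = 2⁻¹ := by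
    rw [← mul_inv, ← Complex.ofReal_mul, Real.mul_self_sqrt zero_le_two]; norm_num
  funext ⟨a, b⟩
  fin_cases a <;> fin_cases b <;>
    simp [mulVec, dotProduct, Fintype.sum_prod_type, Fin.sum_univ_two, ptransposeB, Kiso,
      diagState, mul_apply, Fin.sum_univ_four, Pi.single_apply]
  all_goals left; linear_combination ((r1 : ℂ) - r3) * hsqrt2

theorem diag_state_becomes_entangled_general (r1 r2 r3 r4 : ℝ)
    (hcond : Real.sqrt (r2 * r4) < (r1 - r3) / 2) :
    (∃ μ : ℝ, μ < 0 ∧ ∃ v : Fin 2 × Fin 2 → ℂ, v ≠ 0 ∧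
        ptransposeB (Kiso * diagState r1 r2 r3 r4 * Kisoᴴ) *ᵥ v = (μ : ℂ) • v) ∧
      ¬ SepState (Kiso * diagState r1 r2 r3 r4 * Kisoᴴ) := by
  set b := (r1 - r3) / 2 with hb_def
  have hb : 0 < b := (Real.sqrt_nonneg _).trans_lt hcond
  obtain ⟨μ, hμ, hchar⟩ := exists_neg_root_of_mul_lt_sq ((Real.sqrt_lt' hb).mp hcond)
  -- `(b, μ - r2)` is an eigenvector of `!![r2, b; b, r4]` for its eigenvalue `μ`
  set v : Fin 2 × Fin 2 → ℂ := Pi.single (0, 1) (b : ℂ) + Pi.single (1, 0) ((μ - r2 : ℝ) : ℂ)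
  have hv : v ≠ 0 := fun h => by
    simpa [v, hb.ne'] using congrFun h (0, 1)
  have heigen : ptransposeB (Kiso * diagState r1 r2 r3 r4 * Kisoᴴ) *ᵥ v = (μ : ℂ) • v := by
    rw [ptransposeB_Kiso_diagState_mulVec, smul_add, ← Pi.single_smul, ← Pi.single_smul]
    have hcharC : (b : ℂ) * b + r4 * (μ - r2) = μ * (μ - r2) := by
      exact_mod_cast (by linear_combination -hchar : b * b + r4 * (μ - r2) = μ * (μ - r2))
    rw [← hb_def, smul_eq_mul, smul_eq_mul]
    push_cast
    rw [← hcharC]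
    congr 2
    ring
  exact ⟨⟨μ, hμ, v, hv, heigen⟩, fun hsep =>
    hμ.not_ge (hsep.posSemidef_ptransposeB.nonneg_of_mulVec_eq_smul hv heigen)⟩

/-- If `(ρ₁ − ρ_{d²−1})/2 > √(ρ_{d²−2}·ρ_{d²})` then the partial transpose of
`KρK†` has a negative eigenvalue, hence `KρK†` is entangled. -/
theorem diag_state_becomes_entangled (r1 r2 r3 r4 : ℝ)
    (h12 : r2 ≤ r1) (h23 : r3 ≤ r2) (h34 : r4 ≤ r3) (h4 : 0 ≤ r4)
    (hcond : Real.sqrt (r2 * r4) < (r1 - r3) / 2) :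
    (∃ μ : ℝ, μ < 0 ∧ ∃ v : Fin 2 × Fin 2 → ℂ, v ≠ 0 ∧
        ptransposeB (Kiso * diagState r1 r2 r3 r4 * Kisoᴴ) *ᵥ v = (μ : ℂ) • v) ∧
      ¬ SepState (Kiso * diagState r1 r2 r3 r4 * Kisoᴴ) :=
  diag_state_becomes_entangled_general r1 r2 r3 r4 hcond

end
end

section
/- Let ρ be a density matrix on a D = d₁·d₂ dimensional space with eigenvalues ρ₁ ≥ ⋯ ≥ ρ_{d²} where d₁ = d₂ = d ≥ 2 and d² > 3. If ρ₁ > 3/d², then there exists a unitary U such that U ρ U† is entangled with respect to the fixed factorization C^d ⊗ C^d. -/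
open Matrix
open scoped Kronecker ComplexOrder

noncomputable section

/-!
By the Peres–Horodecki criterion a separable state `σ` has positive semidefinite partial
transpose, so for `a ≠ b` the value `⟪ψ, σᵀᵇ ψ⟫` with `ψ = |ab⟩ - |ba⟩` is nonnegative. In terms
of the Bell states `Φ± = (|aa⟩ ± |bb⟩)/√2`, `Ψ± = (|ab⟩ ± |ba⟩)/√2` this value is
`⟨Φ⁻|σ|Φ⁻⟩ + ⟨Ψ⁺|σ|Ψ⁺⟩ + ⟨Ψ⁻|σ|Ψ⁻⟩ - ⟨Φ⁺|σ|Φ⁺⟩`.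
If `λ > 3/d²` is an eigenvalue of `ρ`, then, as the eigenvalues are nonnegative with sum one,
at most `d² - 3` of them are `≥ λ/3`; so three other eigenvalues sum to less than `λ`.
A unitary sending the corresponding four eigenvectors to `Φ⁺, Φ⁻, Ψ⁺, Ψ⁻` makes the value negative.
-/

open scoped InnerProductSpace

namespace Matrix

variable {m n R : Type*} [CommSemiring R]

def partialTranspose : Matrix (m × n) (m × n) R →ₗ[R] Matrix (m × n) (m × n) R where
  toFun M := of fun p q => M (p.1, q.2) (q.1, p.2)
  map_add' _ _ := rfl
  map_smul' _ _ := rfl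

@[simp]
theorem partialTranspose_apply (M : Matrix (m × n) (m × n) R) (p q : m × n) :
    partialTranspose M p q = M (p.1, q.2) (q.1, p.2) := rfl

theorem partialTranspose_kronecker (A : Matrix m m R) (B : Matrix n n R) :
    partialTranspose (A ⊗ₖ B) = A ⊗ₖ Bᵀ := by
  ext p q
  simp [kroneckerMap_apply]

end Matrix

theorem SepState.posSemidef_partialTranspose {d₁ d₂ : ℕ}
    {σ : Matrix (Fin d₁ × Fin d₂) (Fin d₁ × Fin d₂) ℂ} (hσ : SepState σ) :
    (partialTranspose σ).PosSemidef := by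
  obtain ⟨n, w, σ₁, σ₂, hw, -, hσ₁, hσ₂, rfl⟩ := hσ
  simp only [map_sum, map_smul, partialTranspose_kronecker]
  refine posSemidef_sum _ fun i _ => ((hσ₁ i).1.kronecker (hσ₂ i).1.transpose).smul ?_
  exact_mod_cast hw i

theorem SepState.witness_nonneg {d : ℕ} {σ : Matrix (Fin d × Fin d) (Fin d × Fin d) ℂ}
    (hσ : SepState σ) (a b : Fin d) :
    0 ≤ σ (a, b) (a, b) + σ (b, a) (b, a) - σ (a, a) (b, b) - σ (b, b) (a, a) := by
  have h := hσ.posSemidef_partialTranspose.dotProduct_mulVec_nonneg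
    (Pi.single (a, b) 1 - Pi.single (b, a) 1)
  simp only [mulVec_sub, dotProduct_sub, star_sub, sub_dotProduct, ← Pi.single_star, star_one,
    single_dotProduct, one_mul, mulVec_single_one, col_apply, partialTranspose_apply] at h
  linear_combination h

section Bell

variable {ι : Type*} [Fintype ι] [DecidableEq ι]

def bellVec (x y : ι) (s : ℂ) : EuclideanSpace ℂ ι :=
  (√2)⁻¹ • (EuclideanSpace.single x 1 + s • EuclideanSpace.single y 1)

theorem inv_sqrt_two_mul_self : ((√2 : ℝ) : ℂ)⁻¹ * ((√2 : ℝ) : ℂ)⁻¹ = 2⁻¹ := by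
  rw [← mul_inv, ← Complex.ofReal_mul, Real.mul_self_sqrt zero_le_two, Complex.ofReal_ofNat]

theorem star_dotProduct_mulVec_bellVec (M : Matrix ι ι ℂ) (x y : ι) (s : ℂ) :
    star ⇑(bellVec x y s) ⬝ᵥ (M *ᵥ ⇑(bellVec x y s)) =
      (M x x + s * M x y + star s * M y x + star s * s * M y y) / 2 := by
  simp only [bellVec, smul_add, WithLp.ofLp_add, WithLp.ofLp_smul, PiLp.ofLp_single, star_add,
    star_smul, star_trivial, Pi.star_single, star_one, mulVec_add, mulVec_smul, mulVec_single,
    MulOpposite.op_one, one_smul, dotProduct_add, dotProduct_smul, add_dotProduct, smul_dotProduct,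
    single_dotProduct, col_apply, one_mul, Complex.real_smul, Complex.ofReal_inv, smul_eq_mul]
  rw [div_eq_mul_inv, ← inv_sqrt_two_mul_self]
  ring

theorem inner_bellVec_bellVec (x y x' y' : ι) (s s' : ℂ) :
    ⟪bellVec x y s, bellVec x' y' s'⟫_ℂ =
      ((if x = x' then 1 else 0) + s' * (if x = y' then 1 else 0) +
        star s * (if y = x' then 1 else 0) + star s * s' * (if y = y' then 1 else 0)) / 2 := by
  simp only [bellVec, smul_add, CStarModule.inner_add_right, CStarModule.inner_smul_right_real,
    CStarModule.inner_add_left, CStarModule.inner_smul_left_real,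
    EuclideanSpace.inner_single_left, map_one, PiLp.single_apply, mul_ite, mul_one, mul_zero,
    smul_ite, Complex.real_smul, Complex.ofReal_inv, smul_zero, CStarModule.inner_op_smul_left,
    RCLike.star_def, ite_mul, one_mul, zero_mul, CStarModule.inner_op_smul_right]
  rw [div_eq_mul_inv, ← inv_sqrt_two_mul_self]
  split_ifs <;> ring

-- `![Φ⁺, Φ⁻, Ψ⁺, Ψ⁻]` on the span of `|aa⟩, |ab⟩, |ba⟩, |bb⟩`.
def bellStates (a b : ι) : Fin 4 → EuclideanSpace ℂ (ι × ι) :=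
  ![bellVec (a, a) (b, b) 1, bellVec (a, a) (b, b) (-1),
    bellVec (a, b) (b, a) 1, bellVec (a, b) (b, a) (-1)]

theorem orthonormal_bellStates {a b : ι} (hab : a ≠ b) : Orthonormal ℂ (bellStates a b) := by
  rw [orthonormal_iff_ite]
  intro k l
  fin_cases k <;> fin_cases l <;>
    simp [bellStates, -inner_self_eq_norm_sq_to_K, inner_bellVec_bellVec, hab, hab.symm]

theorem witness_eq_bellStates (M : Matrix (ι × ι) (ι × ι) ℂ) (a b : ι) :
    M (a, b) (a, b) + M (b, a) (b, a) - M (a, a) (b, b) - M (b, b) (a, a) =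
      ∑ k ∈ {1, 2, 3}, star ⇑(bellStates a b k) ⬝ᵥ (M *ᵥ ⇑(bellStates a b k))
        - star ⇑(bellStates a b 0) ⬝ᵥ (M *ᵥ ⇑(bellStates a b 0)) := by
  simp only [bellStates, Finset.mem_insert, Fin.reduceEq, Finset.mem_singleton, or_self,
    not_false_eq_true, Finset.sum_insert, cons_val_one, cons_val_zero,
    star_dotProduct_mulVec_bellVec, neg_mul, one_mul, star_neg, star_one, mul_neg, mul_one,
    neg_neg, cons_val, Finset.sum_singleton]
  ring

end Bell

theorem not_sepState_of_mulVec_bellStates {d : ℕ} {σ : Matrix (Fin d × Fin d) (Fin d × Fin d) ℂ}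
    {a b : Fin d} (hab : a ≠ b) {μ : Fin 4 → ℝ}
    (hμ : ∀ k, σ *ᵥ ⇑(bellStates a b k) = μ k • ⇑(bellStates a b k))
    (hlt : μ 1 + μ 2 + μ 3 < μ 0) : ¬ SepState σ := by
  intro hσ
  have hq (k : Fin 4) : star ⇑(bellStates a b k) ⬝ᵥ (σ *ᵥ ⇑(bellStates a b k)) = μ k := by
    rw [hμ, dotProduct_smul, dotProduct_comm, ← EuclideanSpace.inner_eq_star_dotProduct,
      inner_self_eq_norm_sq_to_K, (orthonormal_bellStates hab).1 k]
    simp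
  have h := hσ.witness_nonneg a b
  simp only [witness_eq_bellStates, hq] at h
  simp only [Finset.mem_insert, Fin.reduceEq, Finset.mem_singleton, or_self, not_false_eq_true,
    Finset.sum_insert, Finset.sum_singleton, sub_nonneg] at h
  have : μ 0 ≤ μ 1 + (μ 2 + μ 3) := by exact_mod_cast h
  linarith

open Finset in
theorem two_lt_card_filter_lt_third {ι : Type*} [Fintype ι] {f : ι → ℝ} (hf : ∀ j, 0 ≤ f j)
    (hsum : ∑ j, f j = 1) {i : ι} (hi : 3 / Fintype.card ι < f i) :
    2 < #{j | f j < f i / 3} := by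
  by_contra! hsmall
  have hB : Fintype.card ι ≤ #{j | f i / 3 ≤ f j} + 2 := by
    have := card_filter_add_card_filter_not (s := univ) (fun j => f j < f i / 3)
    simp only [not_lt, card_univ] at this
    omega
  set B : Finset ι := {j | f i / 3 ≤ f j}
  have hiB : i ∈ B := mem_filter.2 ⟨mem_univ _, by linarith [hf i]⟩
  classical
  have hlow : ((#B : ℝ) - 1) * (f i / 3) ≤ ∑ j ∈ B.erase i, f j := by
    have := card_nsmul_le_sum (B.erase i) f (f i / 3) fun _ hj =>
      (mem_filter.1 (mem_of_mem_erase hj)).2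
    rwa [card_erase_of_mem hiB, nsmul_eq_mul, Nat.cast_pred (card_pos.2 ⟨i, hiB⟩)] at this
  have hup : f i + ∑ j ∈ B.erase i, f j ≤ 1 := by
    rw [add_sum_erase B f hiB, ← hsum]
    exact sum_le_sum_of_subset_of_nonneg (subset_univ B) fun j _ _ => hf j
  have hcard : (0 : ℝ) < Fintype.card ι := Nat.cast_pos.2 (Fintype.card_pos_iff.2 ⟨i⟩)
  rw [div_lt_iff₀ hcard] at hi
  have : (Fintype.card ι : ℝ) ≤ #B + 2 := by exact_mod_cast hB
  nlinarith [hf i]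

theorem exists_injective_fin_four_sum_lt {ι : Type*} [Fintype ι] {f : ι → ℝ}
    (hf : ∀ j, 0 ≤ f j) (hsum : ∑ j, f j = 1) {i : ι} (hi : 3 / Fintype.card ι < f i) :
    ∃ j : Fin 4 → ι, Function.Injective j ∧ f (j 1) + f (j 2) + f (j 3) < f (j 0) := by
  obtain ⟨a, ha, b, hb, c, hc, hab, hac, hbc⟩ :=
    Finset.two_lt_card.1 (two_lt_card_filter_lt_third hf hsum hi)
  simp only [Finset.mem_filter, Finset.mem_univ, true_and] at ha hb hc
  have hne : ∀ {j}, f j < f i / 3 → j ≠ i := by rintro j hj rfl; linarith [hf j]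
  refine ⟨![i, a, b, c], fun x y hxy => ?_, by simp; linarith⟩
  fin_cases x <;> fin_cases y <;>
    simp_all [hne ha, hne hb, hne hc, (hne ha).symm, (hne hb).symm, (hne hc).symm]

theorem Orthonormal.exists_orthonormalBasis_extension_of_injective {𝕜 E ι κ : Type*} [RCLike 𝕜]
    [NormedAddCommGroup E] [InnerProductSpace 𝕜 E] [FiniteDimensional 𝕜 E] [Fintype ι]
    (card_ι : Module.finrank 𝕜 E = Fintype.card ι) {v : κ → E} (hv : Orthonormal 𝕜 v)
    {j : κ → ι} (hj : Function.Injective j) :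
    ∃ b : OrthonormalBasis ι 𝕜 E, ∀ k, b (j k) = v k := by
  have hrange : (Set.range j).domRestrict (Function.extend j v 0) =
      v ∘ (Equiv.ofInjective j hj).symm := by
    ext ⟨_, k, rfl⟩
    simp [hj.extend_apply]
  obtain ⟨b, hb⟩ := Orthonormal.exists_orthonormalBasis_extension_of_card_eq card_ι
    (hrange ▸ hv.comp _ (Equiv.injective _))
  exact ⟨b, fun k => (hb _ ⟨k, rfl⟩).trans (hj.extend_apply v 0 k)⟩

theorem Matrix.IsHermitian.exists_unitary_conj_mulVec_eq_smul {𝕜 n : Type*} [RCLike 𝕜]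
    [Fintype n] [DecidableEq n] {A : Matrix n n 𝕜} (hA : A.IsHermitian)
    (b : OrthonormalBasis n 𝕜 (EuclideanSpace 𝕜 n)) :
    ∃ U ∈ unitaryGroup n 𝕜, ∀ k, (U * A * Uᴴ) *ᵥ ⇑(b k) = hA.eigenvalues k • ⇑(b k) := by
  set W := (EuclideanSpace.basisFun n 𝕜).toBasis.toMatrix b.toBasis
  have hW : W ∈ unitaryGroup n 𝕜 :=
    (EuclideanSpace.basisFun n 𝕜).toMatrix_orthonormalBasis_mem_unitary b
  set V : Matrix n n 𝕜 := (hA.eigenvectorUnitary : Matrix n n 𝕜)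
  have hWcol (k : n) : W *ᵥ Pi.single k 1 = ⇑(b k) := by rw [mulVec_single_one]; rfl
  have hWstar (k : n) : star W *ᵥ ⇑(b k) = Pi.single k 1 := by
    rw [← hWcol, mulVec_mulVec, Matrix.mem_unitaryGroup_iff'.1 hW, one_mulVec]
  refine ⟨W * star V, mul_mem hW (Unitary.star_mem hA.eigenvectorUnitary.2), fun k => ?_⟩
  rw [← star_eq_conjTranspose, star_mul, star_star,
    ← mulVec_mulVec, ← mulVec_mulVec, ← mulVec_mulVec, ← mulVec_mulVec, hWstar,
    eigenvectorUnitary_mulVec, mulVec_eigenvectorBasis, mulVec_smul,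
    star_eigenvectorUnitary_mulVec, mulVec_smul, hWcol]

theorem exists_unitary_entangled_general {d : ℕ} (hd : 2 ≤ d)
    (ρ : Matrix (Fin d × Fin d) (Fin d × Fin d) ℂ)
    (hρ : IsDensity ρ) (hH : ρ.IsHermitian)
    (hbig : ∃ i, 3 / (d ^ 2 : ℝ) < hH.eigenvalues i) :
    ∃ U ∈ Matrix.unitaryGroup (Fin d × Fin d) ℂ,
      ¬ SepState (U * ρ * Uᴴ) := by
  obtain ⟨i, hi⟩ := hbig
  have hsum : ∑ j, hH.eigenvalues j = 1 := by
    have h := hH.trace_eq_sum_eigenvalues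
    rw [hρ.2, ← RCLike.ofReal_sum] at h
    exact Complex.ofReal_eq_one.1 h.symm
  obtain ⟨j, hj, hlt⟩ := exists_injective_fin_four_sum_lt hρ.1.eigenvalues_nonneg hsum
    (i := i) (by simpa [sq] using hi)
  have hab : (⟨0, by omega⟩ : Fin d) ≠ ⟨1, by omega⟩ := by simp
  obtain ⟨B, hB⟩ := (orthonormal_bellStates hab).exists_orthonormalBasis_extension_of_injective
    finrank_euclideanSpace hj
  obtain ⟨U, hU, hUB⟩ := hH.exists_unitary_conj_mulVec_eq_smul B
  refine ⟨U, hU, not_sepState_of_mulVec_bellStates hab (μ := hH.eigenvalues ∘ j) (fun k => ?_) hlt⟩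
  simpa [hB] using hUB (j k)

/-- If the largest eigenvalue of a density matrix `ρ` on `ℂ^d ⊗ ℂ^d` exceeds
`3/d²`, then there is a unitary `U` such that `U ρ U†` is entangled with respect
to the fixed factorization. -/
theorem exists_unitary_entangled {d : ℕ} (hd : 2 ≤ d) (h3 : 3 < d ^ 2)
    (ρ : Matrix (Fin d × Fin d) (Fin d × Fin d) ℂ)
    (hρ : IsDensity ρ) (hH : ρ.IsHermitian)
    (hbig : ∃ i, 3 / (d ^ 2 : ℝ) < hH.eigenvalues i) :
    ∃ U ∈ Matrix.unitaryGroup (Fin d × Fin d) ℂ,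
      ¬ SepState (U * ρ * Uᴴ) :=
  exists_unitary_entangled_general hd ρ hρ hH hbig
end
end

section
/- Let ρ_e be an entangled density matrix, ρ₀ a separable density matrix minimizing the Hilbert–Schmidt distance to ρ_e over the (compact convex) set of separable states, and define E = (ρ₀ − ρ_e − ⟨ρ₀|ρ₀ − ρ_e⟩·I)/‖ρ₀ − ρ_e‖. Then Tr(ρ_e E) = −‖ρ₀ − ρ_e‖ < 0, Tr(ρ₀ E) = 0, and Tr(ρ_s E) ≥ 0 for every separable density matrix ρ_s; i.e., E is an optimal entanglement witness (Bertlmann–Narnhofer–Thirring theorem). -/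
open Matrix
open scoped Kronecker ComplexOrder

noncomputable section

/-- Hilbert–Schmidt inner product `⟨A|B⟩ = Tr(A†B)`. -/
def hsInner {n : Type*} [Fintype n] (A B : Matrix n n ℂ) : ℂ :=
  (Aᴴ * B).trace

/-- Hilbert–Schmidt norm. -/
def hsNorm {n : Type*} [Fintype n] (A : Matrix n n ℂ) : ℝ :=
  Real.sqrt ((Aᴴ * A).trace.re)

/-!
Write `Δ = ρ₀ - ρe`. Since every state has trace one, `Tr(σ E) = ⟨Δ|σ - ρ₀⟩ / ‖Δ‖` for each
state `σ`; this is `-‖Δ‖` at `σ = ρe` and `0` at `σ = ρ₀`, and `‖Δ‖ > 0` because `ρe` is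
entangled. For separable `σ` the segment `ρ₀ + t (σ - ρ₀)`, `t ∈ [0, 1]`, stays separable, so
`‖Δ‖² ≤ ‖Δ + t (σ - ρ₀)‖² = ‖Δ‖² + 2t Re⟨Δ|σ - ρ₀⟩ + t² ‖σ - ρ₀‖²`; dividing by `t` and
letting `t → 0⁺` gives `Re⟨Δ|σ - ρ₀⟩ ≥ 0`.
-/

open Filter Topology

theorem nonneg_of_forall_mem_Ioo_nonneg_add_mul {r g : ℝ}
    (h : ∀ t ∈ Set.Ioo (0 : ℝ) 1, 0 ≤ r + t * g) : 0 ≤ r := by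
  have hlim : Tendsto (fun t : ℝ => r + t * g) (𝓝[>] 0) (𝓝 r) :=
    ((by fun_prop : Continuous fun t : ℝ => r + t * g).tendsto' 0 r (by simp)).mono_left
      nhdsWithin_le_nhds
  exact ge_of_tendsto hlim (eventually_of_mem (Ioo_mem_nhdsGT one_pos) h)

namespace Matrix

variable {m : Type*} [Fintype m]

theorem hsInner_self_eq_ofReal_hsNorm_sq (A : Matrix m m ℂ) :
    hsInner A A = ((hsNorm A ^ 2 : ℝ) : ℂ) := by
  obtain ⟨hre, him⟩ := Complex.nonneg_iff.mp (posSemidef_conjTranspose_mul_self A).trace_nonneg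
  rw [hsNorm, Real.sq_sqrt hre, hsInner]
  exact Complex.ext rfl him.symm

theorem hsNorm_sq (A : Matrix m m ℂ) : hsNorm A ^ 2 = (hsInner A A).re := by
  rw [hsInner_self_eq_ofReal_hsNorm_sq, Complex.ofReal_re]

theorem hsNorm_nonneg (A : Matrix m m ℂ) : 0 ≤ hsNorm A :=
  Real.sqrt_nonneg _

theorem hsNorm_pos {A : Matrix m m ℂ} (hA : A ≠ 0) : 0 < hsNorm A := by
  refine (hsNorm_nonneg A).lt_of_ne fun h => hA (trace_conjTranspose_mul_self_eq_zero_iff.mp ?_)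
  rw [← hsInner, hsInner_self_eq_ofReal_hsNorm_sq, ← h]
  simp

theorem star_hsInner (A B : Matrix m m ℂ) : star (hsInner A B) = hsInner B A := by
  rw [hsInner, hsInner, ← trace_conjTranspose, conjTranspose_mul, conjTranspose_conjTranspose]

theorem hsNorm_add_smul_sq (A B : Matrix m m ℂ) (t : ℝ) :
    hsNorm (A + t • B) ^ 2 = hsNorm A ^ 2 + 2 * t * (hsInner A B).re + t ^ 2 * hsNorm B ^ 2 := by
  have hexp : hsInner (A + t • B) (A + t • B)
      = hsInner A A + t • (hsInner A B + hsInner B A) + (t ^ 2) • hsInner B B := by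
    simp only [hsInner, conjTranspose_add, conjTranspose_smul, star_trivial, add_mul, mul_add,
      smul_mul, Matrix.mul_smul, trace_add, trace_smul, smul_add, smul_smul]
    module
  simp only [hsNorm_sq, hexp, ← star_hsInner A B, Complex.add_re, Complex.smul_re,
    Complex.star_def, Complex.conj_re, smul_eq_mul]
  ring

theorem re_hsInner_sub_nonneg_of_isMinOn {S : Set (Matrix m m ℂ)} (hS : Convex ℝ S)
    {x y z : Matrix m m ℂ} (hy : y ∈ S) (hmin : IsMinOn (fun w => hsNorm (w - x)) S y)
    (hz : z ∈ S) : 0 ≤ (hsInner (y - x) (z - y)).re := by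
  suffices 0 ≤ 2 * (hsInner (y - x) (z - y)).re by linarith
  refine nonneg_of_forall_mem_Ioo_nonneg_add_mul (g := hsNorm (z - y) ^ 2) fun t ht => ?_
  have hmem : y + t • (z - y) ∈ S := hS.add_smul_sub_mem hy hz (Set.Ioo_subset_Icc_self ht)
  have hle : hsNorm (y - x) ≤ hsNorm (y - x + t • (z - y)) := by
    simpa [sub_add_eq_add_sub] using isMinOn_iff.mp hmin _ hmem
  have hsq := pow_le_pow_left₀ (hsNorm_nonneg _) hle 2
  rw [hsNorm_add_smul_sq] at hsq
  nlinarith [ht.1]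

theorem trace_mul_smul_sub_hsInner_smul_one [DecidableEq m] {ρ₀ Δ σ : Matrix m m ℂ}
    (hρ₀ : ρ₀.IsHermitian) (hΔ : Δ.IsHermitian) (hσ : σ.trace = 1) (c : ℂ) :
    (σ * (c • (Δ - hsInner ρ₀ Δ • 1))).trace = c * hsInner Δ (σ - ρ₀) := by
  simp only [hsInner, hρ₀.eq, hΔ.eq, Matrix.mul_smul, Matrix.mul_sub, trace_smul,
    trace_sub, hσ, smul_eq_mul, mul_one, trace_mul_comm Δ]

end Matrix

theorem convex_setOf_isDensity {n : Type*} [Fintype n] [DecidableEq n] :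
    Convex ℝ {ρ : Matrix n n ℂ | IsDensity ρ} := by
  intro x hx y hy a b ha hb hab
  refine ⟨(hx.1.smul ha).add (hy.1.smul hb), ?_⟩
  rw [trace_add, trace_smul, trace_smul, hx.2, hy.2, ← add_smul, hab, one_smul]

theorem convex_setOf_sepState {d₁ d₂ : ℕ} :
    Convex ℝ {ρ : Matrix (Fin d₁ × Fin d₂) (Fin d₁ × Fin d₂) ℂ | SepState ρ} := by
  rintro ρ ⟨n, w, σ₁, σ₂, hw, hw1, hσ₁, hσ₂, rfl⟩ τ ⟨p, v, τ₁, τ₂, hv, hv1, hτ₁, hτ₂, rfl⟩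
    a b ha hb hab
  refine ⟨n + p, Fin.addCases (a * w ·) (b * v ·), Fin.addCases σ₁ τ₁, Fin.addCases σ₂ τ₂,
    Fin.addCases (by simpa using (mul_nonneg ha <| hw ·)) (by simpa using (mul_nonneg hb <| hv ·)),
    ?_, Fin.addCases (by simpa using hσ₁) (by simpa using hτ₁),
    Fin.addCases (by simpa using hσ₂) (by simpa using hτ₂), ?_⟩
  · simp only [Fin.sum_univ_add, Fin.addCases_left, Fin.addCases_right, ← Finset.mul_sum, hw1,
      hv1, mul_one, hab]
  · simp only [Fin.sum_univ_add, Fin.addCases_left, Fin.addCases_right, Finset.smul_sum,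
      ← Complex.coe_smul, smul_smul, Complex.ofReal_mul]

/-- Bertlmann–Narnhofer–Thirring theorem: for an entangled state `ρ_e` and the
nearest separable state `ρ₀`, the operator
`E = (ρ₀ − ρ_e − ⟨ρ₀|ρ₀ − ρ_e⟩ I)/‖ρ₀ − ρ_e‖` is an optimal entanglement
witness: `Tr(ρ_e E) = −‖ρ₀ − ρ_e‖ < 0`, `Tr(ρ₀ E) = 0`, and `Tr(ρ_s E) ≥ 0` for
every separable state `ρ_s`. -/
theorem bnt_optimal_witness {d₁ d₂ : ℕ}
    (ρe ρ₀ : Matrix (Fin d₁ × Fin d₂) (Fin d₁ × Fin d₂) ℂ)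
    (hρe : IsDensity ρe) (hent : ¬ SepState ρe)
    (hρ₀ : IsDensity ρ₀) (hsep₀ : SepState ρ₀)
    (hmin : ∀ σ : Matrix (Fin d₁ × Fin d₂) (Fin d₁ × Fin d₂) ℂ,
      IsDensity σ → SepState σ → hsNorm (ρ₀ - ρe) ≤ hsNorm (σ - ρe))
    (E : Matrix (Fin d₁ × Fin d₂) (Fin d₁ × Fin d₂) ℂ)
    (hE : E = ((hsNorm (ρ₀ - ρe) : ℂ))⁻¹ •
      (ρ₀ - ρe - hsInner ρ₀ (ρ₀ - ρe) • 1)) :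
    (ρe * E).trace = -(hsNorm (ρ₀ - ρe) : ℂ) ∧
      0 < hsNorm (ρ₀ - ρe) ∧
      (ρ₀ * E).trace = 0 ∧
      ∀ ρs : Matrix (Fin d₁ × Fin d₂) (Fin d₁ × Fin d₂) ℂ,
        IsDensity ρs → SepState ρs → 0 ≤ ((ρs * E).trace).re := by
  have hN : 0 < hsNorm (ρ₀ - ρe) := hsNorm_pos (sub_ne_zero.mpr fun h => hent (h ▸ hsep₀))
  have htrace : ∀ σ : Matrix (Fin d₁ × Fin d₂) (Fin d₁ × Fin d₂) ℂ, σ.trace = 1 →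
      (σ * E).trace = (hsNorm (ρ₀ - ρe) : ℂ)⁻¹ * hsInner (ρ₀ - ρe) (σ - ρ₀) := fun σ hσ =>
    hE ▸ trace_mul_smul_sub_hsInner_smul_one hρ₀.1.1 (hρ₀.1.1.sub hρe.1.1) hσ _
  refine ⟨?_, hN, ?_, fun ρs hρs hseps => ?_⟩
  · rw [htrace ρe hρe.2, ← neg_sub ρ₀ ρe, hsInner, Matrix.mul_neg, trace_neg, ← hsInner,
      hsInner_self_eq_ofReal_hsNorm_sq]
    push_cast
    field_simp
  · rw [htrace ρ₀ hρ₀.2, sub_self, hsInner, Matrix.mul_zero, trace_zero, mul_zero]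
  · have hconv : Convex ℝ {σ : Matrix (Fin d₁ × Fin d₂) (Fin d₁ × Fin d₂) ℂ |
        IsDensity σ ∧ SepState σ} :=
      convex_setOf_isDensity.inter convex_setOf_sepState
    rw [htrace ρs hρs.2, ← Complex.ofReal_inv, Complex.re_ofReal_mul]
    exact mul_nonneg (inv_nonneg.mpr hN.le) (re_hsInner_sub_nonneg_of_isMinOn hconv ⟨hρ₀, hsep₀⟩
      (isMinOn_iff.mpr fun σ hσ => hmin σ hσ.1 hσ.2) ⟨hρs, hseps⟩)
end
end
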